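/- For partial skew Dyck paths ending at level j, the generating function s_j satisfies s_j = z^j (3-3z²-W)/(2P^{j+1}) where W=√(1-6z²+5z⁴) and P = (1+z²+W)/2; in particular s_0 = (3-3z²-W)/(2P) = 1+z²+3z⁴+10z⁶+36z⁸+O(z^{10}) and s_1 = z(3-3z²-W)/(2P²) = z+2z³+6z⁵+21z⁷+79z⁹+O(z^{11}). -/

import Mathlib

inductive SkewStep : Type
  | up : SkewStep
  | down : SkewStep
  | red : SkewStep
deriving DecidableEq

def SkewStep.val : SkewStep → ℤ
  | SkewStep.up => 1
  | SkewStep.down => -1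
  | SkewStep.red => -1

def SkewStep.ok (a b : SkewStep) : Prop :=
  ¬ (a = SkewStep.up ∧ b = SkewStep.red) ∧ ¬ (a = SkewStep.red ∧ b = SkewStep.up)

def IsSkewPrefix (l : List SkewStep) : Prop :=
  l.Chain' SkewStep.ok ∧ ∀ k, 0 ≤ ((l.take k).map SkewStep.val).sum

def IsSkewPath (l : List SkewStep) (j : ℤ) : Prop :=
  IsSkewPrefix l ∧ (l.map SkewStep.val).sum = j

open PowerSeries

/-! Sorting paths by their last step gives, for `j ≥ 0` and with `a_j` the series of paths at
level `j` that do not end with a red step,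
`s_j = (1 - z²) a_j + z s_{j+1}`, `a_0 = 1 + z s_1` and `a_{j+1} = z a_j + z s_{j+2}`.
Eliminating `a` leaves `s_0 = 1 - z² + (2z - z³) s_1` and
`(1 + z²) s_{j+1} = z s_j + (2z - z³) s_{j+2}`. Since `P² = (1 + z²) P - 2z² + z⁴`, the series
`z^j (2 - z² - P) / P^{j+1}` solve the same system, and the system determines the `n`-th
coefficients of all `s_j` from the lower ones, so the two families agree. The listed
coefficients follow by checking the closed forms modulo `z^10`. -/

namespace PowerSeries

variable {R : Type*}

theorem eq_zero_of_forall_X_pow_dvd [Semiring R] {f : R⟦X⟧} (h : ∀ n, X ^ n ∣ f) : f = 0 := by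
  ext n
  exact X_pow_dvd_iff.1 (h (n + 1)) n n.lt_succ_self

theorem coeff_eq_of_X_pow_dvd_sub [Ring R] {f g : R⟦X⟧} {N m : ℕ} (h : X ^ N ∣ f - g)
    (hm : m < N) : coeff m f = coeff m g :=
  sub_eq_zero.1 (by simpa using X_pow_dvd_iff.1 h m hm)

theorem isUnit_of_constantCoeff_eq_one [Ring R] {f : R⟦X⟧} (h : constantCoeff f = 1) :
    IsUnit f :=
  isUnit_iff_constantCoeff.2 (h ▸ isUnit_one)

theorem eq_zero_of_linear_recurrence [CommRing R] {e : ℕ → R⟦X⟧} {A B C Q : R⟦X⟧}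
    (hA : X ∣ A) (hC : X ∣ C) (hB : IsUnit B) (hQ : IsUnit Q)
    (h0 : Q * e 0 = A * e 1) (hrec : ∀ j, B * e (j + 1) = A * e (j + 2) + C * e j) (j : ℕ) :
    e j = 0 := by
  suffices h : ∀ n j, X ^ n ∣ e j from eq_zero_of_forall_X_pow_dvd (h · j)
  intro n
  induction n with
  | zero => simp
  | succ n ih =>
    rintro (_ | j)
    · refine hQ.dvd_mul_left.1 ?_
      rw [h0, pow_succ']
      exact mul_dvd_mul hA (ih 1)
    · refine hB.dvd_mul_left.1 ?_
      rw [hrec, pow_succ']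
      exact dvd_add (mul_dvd_mul hA (ih _)) (mul_dvd_mul hC (ih _))

end PowerSeries

theorem Nat.card_subtype_and_eq_sum_card_fiber {α β : Type*} [Fintype β] (p : α → Prop)
    [Finite {a // p a}] (f : α → β) (q : β → Prop) [DecidablePred q] :
    Nat.card {a // p a ∧ q (f a)} = ∑ b with q b, Nat.card {a // p a ∧ f a = b} := by
  have (b : β) : Finite {a // p a ∧ f a = b} :=
    Finite.of_injective (fun a => (⟨a.1, a.2.1⟩ : {a // p a})) fun a a' h => by
      simpa [Subtype.ext_iff] using h
  let e : {a // p a ∧ q (f a)} ≃ Σ b : {b // q b}, {a // p a ∧ f a = b} :=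
    { toFun a := ⟨⟨f a, a.2.2⟩, ⟨a, a.2.1, rfl⟩⟩
      invFun x := ⟨x.2, x.2.2.1, by rw [x.2.2.2]; exact x.1.2⟩
      left_inv _ := rfl
      right_inv x := Sigma.subtype_ext (Subtype.ext x.2.2.2) rfl }
  rw [Nat.card_congr e, Nat.card_sigma]
  exact (Finset.sum_subtype (Finset.univ.filter q) (fun b => by simp)
    (fun b => Nat.card {a // p a ∧ f a = b})).symm

instance {α : Type*} [Finite α] (n : ℕ) (p : List α → Prop) :
    Finite {l : List α // l.length = n ∧ p l} :=
  ((List.finite_length_eq α n).subset fun _ h => h.1).to_subtype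

theorem List.forall_sum_take_nonneg_append_singleton {M : Type*} [AddMonoid M] [Preorder M]
    (l : List M) (a : M) :
    (∀ k, 0 ≤ ((l ++ [a]).take k).sum) ↔ (∀ k, 0 ≤ (l.take k).sum) ∧ 0 ≤ (l ++ [a]).sum := by
  constructor
  · intro h
    refine ⟨fun k => ?_, by simpa using h (l.length + 1)⟩
    rcases le_or_gt k l.length with hk | hk
    · simpa [List.take_append_of_le_length hk] using h k
    · simpa [List.take_of_length_le hk.le] using h l.length
  · rintro ⟨h, ha⟩ k
    rcases le_or_gt k l.length with hk | hk
    · simpa [List.take_append_of_le_length hk] using h k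
    · rwa [List.take_of_length_le (by simp; omega)]

instance : Fintype SkewStep :=
  ⟨{.up, .down, .red}, fun σ => by cases σ <;> simp⟩

theorem SkewStep.sum_univ {M : Type*} [AddCommMonoid M] (f : SkewStep → M) :
    ∑ σ, f σ = f .up + f .down + f .red := by
  simp [Finset.univ, Fintype.elems, add_assoc]

theorem IsSkewPath.nonneg {l : List SkewStep} {j : ℤ} (h : IsSkewPath l j) : 0 ≤ j := by
  simpa [List.take_of_length_le le_rfl, h.2] using h.1.2 l.length

theorem isSkewPrefix_iff (l : List SkewStep) :
    IsSkewPrefix l ↔ l.IsChain SkewStep.ok ∧ ∀ k, 0 ≤ ((l.take k).map SkewStep.val).sum :=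
  Iff.rfl

theorem isSkewPath_append_singleton (l : List SkewStep) (σ : SkewStep) (j : ℤ) :
    IsSkewPath (l ++ [σ]) j ↔
      IsSkewPath l (j - σ.val) ∧ (∀ τ ∈ l.getLast?, τ.ok σ) ∧ 0 ≤ j := by
  simp only [IsSkewPath, isSkewPrefix_iff, List.isChain_append, List.isChain_singleton,
    List.map_take, List.map_append, List.map_cons, List.map_nil,
    List.forall_sum_take_nonneg_append_singleton, List.sum_append, List.sum_singleton,
    List.head?_cons, Option.mem_some_iff, forall_eq', true_and]
  grind

theorem card_isSkewPath_getLast?_eq_some {n : ℕ} {j : ℤ} (hj : 0 ≤ j) (σ : SkewStep) :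
    Nat.card {l // l.length = n + 1 ∧ IsSkewPath l j ∧ l.getLast? = some σ} =
      Nat.card {l // l.length = n ∧ IsSkewPath l (j - σ.val) ∧ ∀ τ ∈ l.getLast?, τ.ok σ} := by
  symm
  refine Nat.card_congr (Equiv.ofBijective
    (fun l => ⟨l.1 ++ [σ], by simp [l.2.1], (isSkewPath_append_singleton _ _ _).2
      ⟨l.2.2.1, l.2.2.2, hj⟩, List.getLast?_concat⟩) ⟨fun l l' h => ?_, fun l => ?_⟩)
  · simpa [Subtype.ext_iff] using h
  · obtain ⟨l, hlen, hpath, hlast⟩ := l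
    obtain ⟨l, rfl⟩ := List.getLast?_eq_some_iff.1 hlast
    obtain ⟨hpath, hok, -⟩ := (isSkewPath_append_singleton _ _ _).1 hpath
    exact ⟨⟨l, by simpa using hlen, hpath, hok⟩, rfl⟩

noncomputable def skewGF (j : ℤ) : ℚ⟦X⟧ :=
  mk fun n => Nat.card {l : List SkewStep // l.length = n ∧ IsSkewPath l j}

/-- `o = none` records the empty path. -/
noncomputable def lastStepGF (j : ℤ) (o : Option SkewStep) : ℚ⟦X⟧ :=
  mk fun n => Nat.card {l : List SkewStep // l.length = n ∧ IsSkewPath l j ∧ l.getLast? = o}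

theorem skewGF_eq_sum_lastStepGF (j : ℤ) : skewGF j = ∑ o, lastStepGF j o := by
  ext n
  have h := Nat.card_subtype_and_eq_sum_card_fiber
    (fun l : List SkewStep => l.length = n ∧ IsSkewPath l j) List.getLast? (fun _ => True)
  simp only [and_true, Finset.filter_true] at h
  simp only [skewGF, lastStepGF, coeff_mk, map_sum, h, Nat.cast_sum, and_assoc]

theorem lastStepGF_of_neg {j : ℤ} (hj : j < 0) (o : Option SkewStep) : lastStepGF j o = 0 := by
  ext n
  have : IsEmpty {l : List SkewStep // l.length = n ∧ IsSkewPath l j ∧ l.getLast? = o} :=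
    ⟨fun l => hj.not_ge l.2.2.1.nonneg⟩
  simp [lastStepGF]

theorem lastStepGF_none (j : ℤ) : lastStepGF j none = if j = 0 then 1 else 0 := by
  ext n
  simp only [lastStepGF, coeff_mk, List.getLast?_eq_none_iff]
  by_cases h : n = 0 ∧ j = 0
  · obtain ⟨rfl, rfl⟩ := h
    have : Unique {l : List SkewStep // l.length = 0 ∧ IsSkewPath l 0 ∧ l = []} :=
      ⟨⟨⟨[], rfl, ⟨⟨List.isChain_nil, by simp⟩, rfl⟩, rfl⟩⟩, fun l => Subtype.ext l.2.2.2⟩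
    rw [Nat.card_unique]
    simp
  · have : IsEmpty {l : List SkewStep // l.length = n ∧ IsSkewPath l j ∧ l = []} :=
      ⟨fun ⟨l, hn, hp, hl⟩ => h (by subst hl; exact ⟨hn.symm, hp.2.symm⟩)⟩
    rw [Nat.card_of_isEmpty]
    split_ifs with hj <;> simp_all [coeff_one]

open scoped Classical in
theorem lastStepGF_some {j : ℤ} (hj : 0 ≤ j) (σ : SkewStep) :
    lastStepGF j (some σ) =
      X * ∑ o with ∀ τ ∈ o, τ.ok σ, lastStepGF (j - σ.val) o := by
  ext n
  rcases n with _ | n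
  · have : IsEmpty {l : List SkewStep // l.length = 0 ∧ IsSkewPath l j ∧ l.getLast? = some σ} :=
      ⟨fun ⟨l, hn, _, hl⟩ => by simp [List.length_eq_zero_iff.1 hn] at hl⟩
    simp only [lastStepGF, coeff_mk, Nat.card_of_isEmpty]
    simp
  · have h := Nat.card_subtype_and_eq_sum_card_fiber
      (fun l : List SkewStep => l.length = n ∧ IsSkewPath l (j - σ.val)) List.getLast?
      (fun o => ∀ τ ∈ o, τ.ok σ)
    simp only [and_assoc] at h
    simp only [lastStepGF, coeff_mk, coeff_succ_X_mul, map_sum,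
      card_isSkewPath_getLast?_eq_some hj, h, Nat.cast_sum]

theorem lastStepGF_up {j : ℤ} (hj : 0 ≤ j) :
    lastStepGF j (some .up) = X * (lastStepGF (j - 1) none + lastStepGF (j - 1) (some .up) +
      lastStepGF (j - 1) (some .down)) := by
  rw [lastStepGF_some hj, Finset.sum_filter, Fintype.sum_option, SkewStep.sum_univ]
  simp [SkewStep.ok, SkewStep.val, add_assoc]

theorem lastStepGF_down {j : ℤ} (hj : 0 ≤ j) :
    lastStepGF j (some .down) = X * skewGF (j + 1) := by
  rw [lastStepGF_some hj, Finset.sum_filter, Fintype.sum_option, SkewStep.sum_univ,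
    skewGF_eq_sum_lastStepGF, Fintype.sum_option, SkewStep.sum_univ]
  simp [SkewStep.ok, SkewStep.val, add_assoc]

theorem lastStepGF_red {j : ℤ} (hj : 0 ≤ j) :
    lastStepGF j (some .red) = X * (skewGF (j + 1) - lastStepGF (j + 1) (some .up)) := by
  rw [lastStepGF_some hj, Finset.sum_filter, Fintype.sum_option, SkewStep.sum_univ,
    skewGF_eq_sum_lastStepGF, Fintype.sum_option, SkewStep.sum_univ]
  simp [SkewStep.ok, SkewStep.val, add_assoc, add_sub_cancel_left,
    add_left_comm _ (lastStepGF _ (some .up))]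

noncomputable def notRedEndGF (j : ℤ) : ℚ⟦X⟧ :=
  lastStepGF j none + lastStepGF j (some .up) + lastStepGF j (some .down)

theorem skewGF_eq_notRedEndGF {j : ℤ} (hj : 0 ≤ j) :
    skewGF j = (1 - X ^ 2) * notRedEndGF j + X * skewGF (j + 1) := by
  have hup := lastStepGF_up (j := j + 1) (by omega)
  rw [add_sub_cancel_right] at hup
  rw [skewGF_eq_sum_lastStepGF, Fintype.sum_option, SkewStep.sum_univ, lastStepGF_red hj, hup,
    notRedEndGF]
  ring

theorem notRedEndGF_zero : notRedEndGF 0 = 1 + X * skewGF 1 := by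
  rw [notRedEndGF, lastStepGF_none, lastStepGF_up le_rfl, lastStepGF_down le_rfl]
  simp [lastStepGF_of_neg]

theorem notRedEndGF_succ {j : ℤ} (hj : 0 ≤ j) :
    notRedEndGF (j + 1) = X * notRedEndGF j + X * skewGF (j + 2) := by
  have hdown : lastStepGF (j + 1) (some .down) = X * skewGF (j + 2) := by
    rw [lastStepGF_down (by omega), add_assoc, one_add_one_eq_two]
  rw [notRedEndGF, lastStepGF_none, lastStepGF_up (by omega), hdown, if_neg (by omega),
    add_sub_cancel_right, notRedEndGF]
  ring

theorem skewGF_zero : skewGF 0 = 1 - X ^ 2 + (2 * X - X ^ 3) * skewGF 1 := by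
  have h := skewGF_eq_notRedEndGF le_rfl
  rw [zero_add] at h
  linear_combination h + (1 - X ^ 2) * notRedEndGF_zero

theorem skewGF_add_two {j : ℤ} (hj : 0 ≤ j) :
    (1 + X ^ 2) * skewGF (j + 1) = X * skewGF j + (2 * X - X ^ 3) * skewGF (j + 2) := by
  have h := skewGF_eq_notRedEndGF (j := j + 1) (by omega)
  rw [add_assoc, one_add_one_eq_two] at h
  linear_combination h + (1 - X ^ 2) * notRedEndGF_succ hj - X * skewGF_eq_notRedEndGF hj

theorem skewGF_mul_pow {P : ℚ⟦X⟧} (hP0 : constantCoeff P = 1)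
    (hP2 : P ^ 2 = (1 + X ^ 2) * P - 2 * X ^ 2 + X ^ 4) (j : ℕ) :
    skewGF j * P ^ (j + 1) = X ^ j * (2 - X ^ 2 - P) := by
  have hB : constantCoeff ((1 + X ^ 2) * P) = 1 := by simp [hP0]
  refine sub_eq_zero.1 <| eq_zero_of_linear_recurrence
    (e := fun j => skewGF j * P ^ (j + 1) - X ^ j * (2 - X ^ 2 - P))
    (A := 2 * X - X ^ 3) (C := X * P ^ 2) ⟨2 - X ^ 2, by ring⟩ (dvd_mul_right _ _)
    (isUnit_of_constantCoeff_eq_one hB) (isUnit_of_constantCoeff_eq_one hP0) ?_ (fun j => ?_) j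
  · push_cast
    linear_combination P ^ 2 * skewGF_zero + (2 - X ^ 2) * hP2
  · push_cast
    linear_combination P ^ (j + 3) * skewGF_add_two (Int.natCast_nonneg j) +
      X ^ (j + 1) * (2 - X ^ 2 - P) * hP2

theorem X_pow_ten_dvd_sub_P {P : ℚ⟦X⟧} (hP0 : constantCoeff P = 1)
    (hP2 : P ^ 2 = (1 + X ^ 2) * P - 2 * X ^ 2 + X ^ 4) :
    X ^ 10 ∣ P - (1 - X ^ 2 - X ^ 4 - 3 * X ^ 6 - 10 * X ^ 8) := by
  have hu : constantCoeff (P + (1 - X ^ 2 - X ^ 4 - 3 * X ^ 6 - 10 * X ^ 8) - 1 - X ^ 2) = 1 := by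
    simp [hP0]
  -- With `p` the truncation above, `(P - p) (P + p - 1 - z²) = -(p² - (1 + z²) p + 2z² - z⁴)`,
  -- which is `O(z^10)`.
  refine (isUnit_of_constantCoeff_eq_one hu).dvd_mul_right.1
    ⟨-(36 + 29 * X ^ 2 + 60 * X ^ 4 + 100 * X ^ 6), ?_⟩
  linear_combination hP2

theorem X_pow_ten_dvd_sub_skewGF_zero {P : ℚ⟦X⟧} (hP0 : constantCoeff P = 1)
    (hP2 : P ^ 2 = (1 + X ^ 2) * P - 2 * X ^ 2 + X ^ 4) :
    X ^ 10 ∣ skewGF 0 - (1 + X ^ 2 + 3 * X ^ 4 + 10 * X ^ 6 + 36 * X ^ 8) := by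
  have h := skewGF_mul_pow hP0 hP2 0
  push_cast at h
  refine (isUnit_of_constantCoeff_eq_one hP0).dvd_mul_right.1 ?_
  have : (skewGF 0 - (1 + X ^ 2 + 3 * X ^ 4 + 10 * X ^ 6 + 36 * X ^ 8)) * P =
      X ^ 10 * (65 + 96 * X ^ 2 + 208 * X ^ 4 + 360 * X ^ 6) -
        (2 + X ^ 2 + 3 * X ^ 4 + 10 * X ^ 6 + 36 * X ^ 8) *
          (P - (1 - X ^ 2 - X ^ 4 - 3 * X ^ 6 - 10 * X ^ 8)) := by
    linear_combination h
  rw [this]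
  exact dvd_sub (dvd_mul_right _ _) (dvd_mul_of_dvd_right (X_pow_ten_dvd_sub_P hP0 hP2) _)

theorem X_pow_ten_dvd_sub_skewGF_one {P : ℚ⟦X⟧} (hP0 : constantCoeff P = 1)
    (hP2 : P ^ 2 = (1 + X ^ 2) * P - 2 * X ^ 2 + X ^ 4) :
    X ^ 10 ∣ skewGF 1 - (X + 2 * X ^ 3 + 6 * X ^ 5 + 21 * X ^ 7 + 79 * X ^ 9) := by
  have h0 := skewGF_mul_pow hP0 hP2 0
  have h1 := skewGF_mul_pow hP0 hP2 1
  push_cast at h0 h1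
  refine ((isUnit_of_constantCoeff_eq_one hP0).pow 2).dvd_mul_right.1 ?_
  have : (skewGF 1 - (X + 2 * X ^ 3 + 6 * X ^ 5 + 21 * X ^ 7 + 79 * X ^ 9)) * P ^ 2 =
      P * (X * (skewGF 0 - (1 + X ^ 2 + 3 * X ^ 4 + 10 * X ^ 6 + 36 * X ^ 8)) +
        X ^ 10 * (138 * X + 202 * X ^ 3 + 447 * X ^ 5 + 790 * X ^ 7) -
        (X + 2 * X ^ 3 + 6 * X ^ 5 + 21 * X ^ 7 + 79 * X ^ 9) *
          (P - (1 - X ^ 2 - X ^ 4 - 3 * X ^ 6 - 10 * X ^ 8))) := by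
    linear_combination h1 - X * h0
  rw [this]
  refine dvd_mul_of_dvd_right (dvd_sub (dvd_add ?_ (dvd_mul_right _ _)) ?_) _
  · exact dvd_mul_of_dvd_right (X_pow_ten_dvd_sub_skewGF_zero hP0 hP2) _
  · exact dvd_mul_of_dvd_right (X_pow_ten_dvd_sub_P hP0 hP2) _

/-- For partial skew Dyck paths ending at level `j`, the generating function
`s_j` satisfies `s_j · 2P^{j+1} = z^j (3-3z²-W)` where `W = √(1-6z²+5z⁴)` and
`P = (1+z²+W)/2`; in particular
`s₀ = 1+z²+3z⁴+10z⁶+36z⁸+⋯` and `s₁ = z+2z³+6z⁵+21z⁷+79z⁹+⋯`. -/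
theorem partial_paths_level_j (s : ℕ → PowerSeries ℚ) (W P : PowerSeries ℚ)
    (hs : ∀ j n : ℕ, PowerSeries.coeff n (s j)
        = Nat.card {l : List SkewStep // l.length = n ∧ IsSkewPath l (j : ℤ)})
    (hW : W ^ 2 = 1 - 6 * PowerSeries.X ^ 2 + 5 * PowerSeries.X ^ 4)
    (hW0 : PowerSeries.coeff 0 W = 1)
    (hP : 2 * P = 1 + PowerSeries.X ^ 2 + W) :
    (∀ j : ℕ, s j * (2 * P ^ (j + 1))
        = PowerSeries.X ^ j * (3 - 3 * PowerSeries.X ^ 2 - W)) ∧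
    PowerSeries.coeff 0 (s 0) = 1 ∧ PowerSeries.coeff 2 (s 0) = 1 ∧
    PowerSeries.coeff 4 (s 0) = 3 ∧ PowerSeries.coeff 6 (s 0) = 10 ∧
    PowerSeries.coeff 8 (s 0) = 36 ∧
    PowerSeries.coeff 1 (s 1) = 1 ∧ PowerSeries.coeff 3 (s 1) = 2 ∧
    PowerSeries.coeff 5 (s 1) = 6 ∧ PowerSeries.coeff 7 (s 1) = 21 ∧
    PowerSeries.coeff 9 (s 1) = 79 := by
  have hs_eq (j : ℕ) : s j = skewGF j := by ext n; simp [hs, skewGF]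
  obtain rfl : W = 2 * P - 1 - X ^ 2 := by linear_combination -hP
  have hP0 : constantCoeff P = 1 := by
    rw [coeff_zero_eq_constantCoeff_apply] at hW0
    have h : 2 * constantCoeff P - 1 = 1 := by simpa [map_ofNat constantCoeff 2] using hW0
    linarith
  have hP2 : P ^ 2 = (1 + X ^ 2) * P - 2 * X ^ 2 + X ^ 4 := by
    have h4 : IsUnit (4 : ℚ⟦X⟧) := isUnit_iff_constantCoeff.2 (by simp [map_ofNat constantCoeff 4])
    exact sub_eq_zero.1 <| h4.mul_right_eq_zero.1 (by linear_combination hW)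
  have h0 := X_pow_ten_dvd_sub_skewGF_zero hP0 hP2
  have h1 := X_pow_ten_dvd_sub_skewGF_one hP0 hP2
  refine ⟨fun j => ?_, ?_⟩
  · rw [hs_eq]
    linear_combination 2 * skewGF_mul_pow hP0 hP2 j
  · simp only [hs_eq, Nat.cast_zero, Nat.cast_one]
    refine ⟨?_, ?_, ?_, ?_, ?_, ?_, ?_, ?_, ?_, ?_⟩ <;>
      first
      | rw [coeff_eq_of_X_pow_dvd_sub h0 (by norm_num)]
      | rw [coeff_eq_of_X_pow_dvd_sub h1 (by norm_num)]
    all_goals simp [← map_ofNat (C (R := ℚ)), coeff_X_pow, coeff_X]
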